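/- arXiv:2506.17698 — 7 statements merged into one kernel-verified Lean document; each statement's English description precedes it below -/
import Mathlib

section
/- Let T : E → E be γ-Lipschitz with γ > 0, let x₀ ∈ E, let λ ∈ (0,1), and let the sequence (x_k) be defined by x_{k+1} = λ·x₀ + (1-λ)·T(x_k). Then for every k ≥ 1, ‖T(x_k) - x_k‖ ≤ (1-λ)^k·γ^k·‖T(x₀) - x₀‖ + (λ/(1-λ))·‖x₀ - x_k‖. -/
/-!
Write `dₖ = x_{k+1} - x_k`. Consecutive Halpern iterates differ by `(1-λ)` times a difference of
values of `T`, so `‖d_{k+1}‖ ≤ (1-λ)γ‖dₖ‖` and `‖dₖ‖ ≤ ((1-λ)γ)^k (1-λ)‖T x₀ - x₀‖`. On the other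
hand `(1-λ)(T xₖ - xₖ) = dₖ + λ(xₖ - x₀)`, and the triangle inequality finishes the proof.
-/

section HalpernIteration

variable {E : Type*} [NormedAddCommGroup E] [NormedSpace ℝ E]
  {T : E → E} {x₀ : E} {l : ℝ} {x : ℕ → E}

theorem halpern_one_sub_zero (hx0 : x 0 = x₀)
    (hx : ∀ k : ℕ, x (k + 1) = l • x₀ + (1 - l) • T (x k)) :
    x 1 - x 0 = (1 - l) • (T x₀ - x₀) := by
  rw [hx 0, hx0]
  module

theorem halpern_succ_succ_sub_succ (hx : ∀ k : ℕ, x (k + 1) = l • x₀ + (1 - l) • T (x k))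
    (k : ℕ) : x (k + 2) - x (k + 1) = (1 - l) • (T (x (k + 1)) - T (x k)) := by
  rw [hx (k + 1), hx k]
  module

theorem halpern_smul_sub_self (hx : ∀ k : ℕ, x (k + 1) = l • x₀ + (1 - l) • T (x k)) (k : ℕ) :
    (1 - l) • (T (x k) - x k) = (x (k + 1) - x k) + l • (x k - x₀) := by
  rw [hx k]
  module

theorem norm_halpern_succ_sub_le_pow {γ : ℝ} (hγ : 0 ≤ γ)
    (hT : ∀ x y : E, ‖T x - T y‖ ≤ γ * ‖x - y‖) (hl1 : l ≤ 1) (hx0 : x 0 = x₀)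
    (hx : ∀ k : ℕ, x (k + 1) = l • x₀ + (1 - l) • T (x k)) (k : ℕ) :
    ‖x (k + 1) - x k‖ ≤ ((1 - l) * γ) ^ k * ((1 - l) * ‖T x₀ - x₀‖) := by
  have h1l : 0 ≤ 1 - l := by linarith
  have hstep : ∀ n, ‖x (n + 2) - x (n + 1)‖ ≤ (1 - l) * γ * ‖x (n + 1) - x n‖ := fun n ↦ by
    rw [halpern_succ_succ_sub_succ hx, norm_smul, Real.norm_of_nonneg h1l, mul_assoc]
    exact mul_le_mul_of_nonneg_left (hT _ _) h1l
  have hgeom := le_geom (u := fun n ↦ ‖x (n + 1) - x n‖) (mul_nonneg h1l hγ) k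
    fun n _ ↦ hstep n
  rwa [halpern_one_sub_zero hx0 hx, norm_smul, Real.norm_of_nonneg h1l] at hgeom

theorem one_sub_mul_norm_halpern_sub_le (hl0 : 0 ≤ l) (hl1 : l ≤ 1)
    (hx : ∀ k : ℕ, x (k + 1) = l • x₀ + (1 - l) • T (x k)) (k : ℕ) :
    (1 - l) * ‖T (x k) - x k‖ ≤ ‖x (k + 1) - x k‖ + l * ‖x₀ - x k‖ := by
  calc (1 - l) * ‖T (x k) - x k‖ = ‖(x (k + 1) - x k) + l • (x k - x₀)‖ := by
        rw [← halpern_smul_sub_self hx, norm_smul, Real.norm_of_nonneg (by linarith)]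
    _ ≤ ‖x (k + 1) - x k‖ + l * ‖x₀ - x k‖ := by
        grw [norm_add_le, norm_smul, Real.norm_of_nonneg hl0, norm_sub_rev (x k)]

end HalpernIteration

/-- Fixed-step Halpern iteration: fixed-point error bound.
For a γ-Lipschitz operator `T` (γ > 0) and the iteration
`x_{k+1} = λ • x₀ + (1-λ) • T (x_k)` with λ ∈ (0,1), for all `k ≥ 1`,
`‖T x_k - x_k‖ ≤ (1-λ)^k γ^k ‖T x₀ - x₀‖ + (λ/(1-λ)) ‖x₀ - x_k‖`. -/
theorem fixed_step_halpern_fixed_point_error_bound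
    {E : Type*} [NormedAddCommGroup E] [NormedSpace ℝ E]
    (T : E → E) (γ : ℝ) (hγ : 0 < γ)
    (hT : ∀ x y : E, ‖T x - T y‖ ≤ γ * ‖x - y‖)
    (x₀ : E) (l : ℝ) (hl0 : 0 < l) (hl1 : l < 1)
    (x : ℕ → E) (hx0 : x 0 = x₀)
    (hx : ∀ k : ℕ, x (k + 1) = l • x₀ + (1 - l) • T (x k)) :
    ∀ k : ℕ, 1 ≤ k →
      ‖T (x k) - x k‖ ≤
        (1 - l) ^ k * γ ^ k * ‖T x₀ - x₀‖ + (l / (1 - l)) * ‖x₀ - x k‖ := by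
  intro k _
  have h1l : 0 < 1 - l := by linarith
  have hres := one_sub_mul_norm_halpern_sub_le hl0.le hl1.le hx k
  have hdiff := norm_halpern_succ_sub_le_pow hγ.le hT hl1.le hx0 hx k
  rw [mul_pow] at hdiff
  calc ‖T (x k) - x k‖ ≤ (‖x (k + 1) - x k‖ + l * ‖x₀ - x k‖) / (1 - l) := by
        rwa [le_div_iff₀ h1l, mul_comm]
    _ ≤ ((1 - l) ^ k * γ ^ k * ((1 - l) * ‖T x₀ - x₀‖) + l * ‖x₀ - x k‖) / (1 - l) := by
        gcongr
    _ = (1 - l) ^ k * γ ^ k * ‖T x₀ - x₀‖ + (l / (1 - l)) * ‖x₀ - x k‖ := by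
        field_simp
end

section
/- Let T : E → E be γ-Lipschitz with 0 < γ ≤ 1, let x* ∈ E satisfy T(x*) = x*, let x₀ ∈ E, let λ ∈ (0,1), and let the sequence (x_k) be defined by x_{k+1} = λ·x₀ + (1-λ)·T(x_k). Then for every k ≥ 1, ‖T(x_k) - x_k‖ ≤ (1-λ)^k·γ^k·‖T(x₀) - x₀‖ + (2λ/(1-λ))·‖x₀ - x*‖. -/
/-- For a γ-Lipschitz operator with 0 < γ ≤ 1 and fixed point `x⋆`, the
fixed-step Halpern iteration satisfies, for all `k ≥ 1`,
`‖T x_k - x_k‖ ≤ (1-λ)^k γ^k ‖T x₀ - x₀‖ + (2λ/(1-λ)) ‖x₀ - x⋆‖`. -/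
theorem fixed_step_halpern_error_bound_with_fixed_point
    {E : Type*} [NormedAddCommGroup E] [NormedSpace ℝ E]
    (T : E → E) (γ : ℝ) (hγ0 : 0 < γ) (hγ1 : γ ≤ 1)
    (hT : ∀ x y : E, ‖T x - T y‖ ≤ γ * ‖x - y‖)
    (xs : E) (hxs : T xs = xs)
    (x₀ : E) (l : ℝ) (hl0 : 0 < l) (hl1 : l < 1)
    (x : ℕ → E) (hx0 : x 0 = x₀)
    (hx : ∀ k : ℕ, x (k + 1) = l • x₀ + (1 - l) • T (x k)) :
    ∀ k : ℕ, 1 ≤ k →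
      ‖T (x k) - x k‖ ≤
        (1 - l) ^ k * γ ^ k * ‖T x₀ - x₀‖ + (2 * l / (1 - l)) * ‖x₀ - xs‖ := by
  have h1l : (0:ℝ) < 1 - l := by linarith
  have hD : (0:ℝ) ≤ ‖x₀ - xs‖ := norm_nonneg _
  -- iterates stay within ‖x₀ - xs‖ of the fixed point
  have hA : ∀ k, ‖x k - xs‖ ≤ ‖x₀ - xs‖ := by
    intro k
    induction k with
    | zero => simp [hx0]
    | succ n ih =>
      have hid : x (n+1) - xs = l • (x₀ - xs) + (1 - l) • (T (x n) - xs) := by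
        rw [hx n]; module
      have hTn : ‖T (x n) - xs‖ ≤ ‖x₀ - xs‖ := by
        calc ‖T (x n) - xs‖ = ‖T (x n) - T xs‖ := by rw [hxs]
          _ ≤ γ * ‖x n - xs‖ := hT _ _
          _ ≤ 1 * ‖x₀ - xs‖ := by
              apply mul_le_mul hγ1 ih (norm_nonneg _) zero_le_one
          _ = ‖x₀ - xs‖ := one_mul _
      calc ‖x (n+1) - xs‖ ≤ ‖l • (x₀ - xs)‖ + ‖(1 - l) • (T (x n) - xs)‖ := by
            rw [hid]; exact norm_add_le _ _
        _ = l * ‖x₀ - xs‖ + (1 - l) * ‖T (x n) - xs‖ := by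
            rw [norm_smul, norm_smul, Real.norm_of_nonneg hl0.le,
              Real.norm_of_nonneg h1l.le]
        _ ≤ l * ‖x₀ - xs‖ + (1 - l) * ‖x₀ - xs‖ := by nlinarith
        _ = ‖x₀ - xs‖ := by ring
  -- successive differences shrink geometrically
  have hB : ∀ k, ‖x (k+1) - x k‖ ≤ ((1 - l) * γ) ^ k * ((1 - l) * ‖T x₀ - x₀‖) := by
    intro k
    induction k with
    | zero =>
      have hid : x 1 - x 0 = (1 - l) • (T x₀ - x₀) := by
        rw [hx 0, hx0]; module
      rw [hid, norm_smul, Real.norm_of_nonneg h1l.le]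
      simp
    | succ n ih =>
      have hid : x (n+2) - x (n+1) = (1 - l) • (T (x (n+1)) - T (x n)) := by
        rw [hx (n+1), hx n]; module
      calc ‖x (n+2) - x (n+1)‖ = (1 - l) * ‖T (x (n+1)) - T (x n)‖ := by
            rw [hid, norm_smul, Real.norm_of_nonneg h1l.le]
        _ ≤ (1 - l) * (γ * ‖x (n+1) - x n‖) := by
            have := hT (x (n+1)) (x n); nlinarith
        _ ≤ (1 - l) * (γ * (((1 - l) * γ) ^ n * ((1 - l) * ‖T x₀ - x₀‖))) := by
            exact mul_le_mul_of_nonneg_left (mul_le_mul_of_nonneg_left ih hγ0.le) h1l.le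
        _ = ((1 - l) * γ) ^ (n+1) * ((1 - l) * ‖T x₀ - x₀‖) := by ring
  intro k hk
  obtain ⟨j, rfl⟩ : ∃ j, k = j + 1 := ⟨k - 1, (Nat.succ_pred_eq_of_pos hk).symm⟩
  have hid : T (x (j+1)) - x (j+1)
      = (T (x (j+1)) - T (x j)) + l • (T (x j) - x₀) := by
    rw [hx j]; module
  have h1 : ‖T (x (j+1)) - T (x j)‖ ≤ (1 - l) ^ (j+1) * γ ^ (j+1) * ‖T x₀ - x₀‖ := by
    calc ‖T (x (j+1)) - T (x j)‖ ≤ γ * ‖x (j+1) - x j‖ := hT _ _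
      _ ≤ γ * (((1 - l) * γ) ^ j * ((1 - l) * ‖T x₀ - x₀‖)) := by
          nlinarith [hB j, norm_nonneg (x (j+1) - x j)]
      _ = (1 - l) ^ (j+1) * γ ^ (j+1) * ‖T x₀ - x₀‖ := by
          rw [mul_pow]; ring
  have h2 : ‖T (x j) - x₀‖ ≤ 2 * ‖x₀ - xs‖ := by
    have hTj : ‖T (x j) - xs‖ ≤ ‖x₀ - xs‖ := by
      calc ‖T (x j) - xs‖ = ‖T (x j) - T xs‖ := by rw [hxs]
        _ ≤ γ * ‖x j - xs‖ := hT _ _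
        _ ≤ 1 * ‖x₀ - xs‖ := by
            apply mul_le_mul hγ1 (hA j) (norm_nonneg _) zero_le_one
        _ = ‖x₀ - xs‖ := one_mul _
    calc ‖T (x j) - x₀‖ = ‖(T (x j) - xs) + (xs - x₀)‖ := by rw [sub_add_sub_cancel]
      _ ≤ ‖T (x j) - xs‖ + ‖xs - x₀‖ := norm_add_le _ _
      _ = ‖T (x j) - xs‖ + ‖x₀ - xs‖ := by rw [norm_sub_rev xs x₀]
      _ ≤ 2 * ‖x₀ - xs‖ := by linarith
  have h3 : l ≤ l / (1 - l) := by
    rw [le_div_iff₀ h1l]; nlinarith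
  calc ‖T (x (j+1)) - x (j+1)‖
      ≤ ‖T (x (j+1)) - T (x j)‖ + ‖l • (T (x j) - x₀)‖ := by
        rw [hid]; exact norm_add_le _ _
    _ = ‖T (x (j+1)) - T (x j)‖ + l * ‖T (x j) - x₀‖ := by
        rw [norm_smul, Real.norm_of_nonneg hl0.le]
    _ ≤ (1 - l) ^ (j+1) * γ ^ (j+1) * ‖T x₀ - x₀‖ + l * (2 * ‖x₀ - xs‖) := by
        nlinarith
    _ ≤ (1 - l) ^ (j+1) * γ ^ (j+1) * ‖T x₀ - x₀‖ + (2 * l / (1 - l)) * ‖x₀ - xs‖ := by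
        have : l * (2 * ‖x₀ - xs‖) ≤ (2 * l / (1 - l)) * ‖x₀ - xs‖ := by
          have h4 : 2 * l ≤ 2 * l / (1 - l) := by
            rw [le_div_iff₀ h1l]; nlinarith
          nlinarith
        linarith
end

section
/- Let T : E → E be γ-Lipschitz with 0 < γ ≤ 1, let x* ∈ E satisfy T(x*) = x*, let x₀ ∈ E with T(x₀) ≠ x₀, and let 0 < ε < 2·‖T(x₀) - x₀‖. Let D* ≥ ‖x₀ - x*‖ with D* > 0, set λ = ε/(4·D* + ε), and let the sequence (x_k) be defined by x_{k+1} = λ·x₀ + (1-λ)·T(x_k). Then for k = ⌈ln(2·‖T(x₀) - x₀‖/ε) / (ln(1/(1-λ)) + ln(1/γ))⌉ we have ‖T(x_k) - x_k‖ ≤ ε. -/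
/-!
Let `q = (1 - λ) γ < 1`. Consecutive Halpern iterates differ by
`(1 - λ) (T x_k - T x_{k-1})`, so their distance decays like `q^k ‖T x₀ - x₀‖`. Since `γ ≤ 1`,
the iterates never leave the ball of radius `D⋆` around `x⋆`, hence `‖x₀ - T x_k‖ ≤ 2 D⋆`.
Writing `T x_k - x_k = λ (T x_k - x₀) + (x_{k+1} - x_k)` gives
`‖T x_k - x_k‖ ≤ q^k ‖T x₀ - x₀‖ + 2 λ D⋆`; the choice of `λ` makes the second term at most
`ε / 2`, and the choice of `k` makes the first one at most `ε / 2`.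
-/

open Real

theorem pow_mul_le_of_log_div_log_le {q r ε : ℝ} {k : ℕ} (hq0 : 0 < q) (hq1 : q < 1)
    (hε : 0 < ε) (hk : log (r / ε) / log (1 / q) ≤ k) : q ^ k * r ≤ ε := by
  rcases le_or_gt r 0 with hr | hr
  · nlinarith [pow_pos hq0 k]
  have hlogq : 0 < log (1 / q) := log_pos (by rw [lt_div_iff₀ hq0]; linarith)
  have hlog : log (r / ε) ≤ k * log (1 / q) := (div_le_iff₀ hlogq).mp hk
  rw [log_le_iff_le_exp (by positivity), exp_nat_mul, exp_log (by positivity), div_pow,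
    one_pow, div_le_div_iff₀ hε (pow_pos hq0 k), one_mul] at hlog
  linarith

theorem norm_apply_sub_fixedPoint_le {E : Type*} [SeminormedAddCommGroup E] {T : E → E}
    {γ : ℝ} {xs : E} (hγ1 : γ ≤ 1) (hT : ∀ x y : E, ‖T x - T y‖ ≤ γ * ‖x - y‖)
    (hxs : T xs = xs) (y : E) : ‖T y - xs‖ ≤ ‖y - xs‖ := by
  have hy := hT y xs
  rw [hxs] at hy
  nlinarith [norm_nonneg (y - xs)]

section Halpern

variable {E : Type*} [SeminormedAddCommGroup E] [NormedSpace ℝ E] {T : E → E} {γ l D : ℝ}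
  {x₀ xs : E} {x : ℕ → E}

theorem halpern_norm_sub_fixedPoint_le (hl0 : 0 ≤ l) (hl1 : l ≤ 1) (hγ1 : γ ≤ 1)
    (hT : ∀ x y : E, ‖T x - T y‖ ≤ γ * ‖x - y‖) (hxs : T xs = xs) (hD : ‖x₀ - xs‖ ≤ D)
    (hx0 : x 0 = x₀) (hx : ∀ k, x (k + 1) = l • x₀ + (1 - l) • T (x k)) (n : ℕ) :
    ‖x n - xs‖ ≤ D := by
  induction n with
  | zero => rwa [hx0]
  | succ n ih =>
    have hsplit : x (n + 1) - xs = l • (x₀ - xs) + (1 - l) • (T (x n) - xs) := by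
      rw [hx n]; module
    have hTn : ‖T (x n) - xs‖ ≤ D := (norm_apply_sub_fixedPoint_le hγ1 hT hxs _).trans ih
    calc ‖x (n + 1) - xs‖ ≤ l * ‖x₀ - xs‖ + (1 - l) * ‖T (x n) - xs‖ := by
          rw [hsplit]
          refine (norm_add_le _ _).trans_eq ?_
          rw [norm_smul, norm_smul, norm_of_nonneg hl0, norm_of_nonneg (sub_nonneg.mpr hl1)]
      _ ≤ l * D + (1 - l) * D := by gcongr
      _ = D := by ring

theorem halpern_norm_succ_sub_le (hl0 : 0 ≤ l) (hl1 : l ≤ 1) (hγ0 : 0 ≤ γ)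
    (hT : ∀ x y : E, ‖T x - T y‖ ≤ γ * ‖x - y‖) (hx0 : x 0 = x₀)
    (hx : ∀ k, x (k + 1) = l • x₀ + (1 - l) • T (x k)) (n : ℕ) :
    ‖x (n + 1) - x n‖ ≤ ((1 - l) * γ) ^ n * ‖T x₀ - x₀‖ := by
  have h1l : 0 ≤ 1 - l := sub_nonneg.mpr hl1
  induction n with
  | zero =>
    have hsplit : x 1 - x 0 = (1 - l) • (T x₀ - x₀) := by rw [hx 0, hx0]; module
    rw [hsplit, norm_smul, norm_of_nonneg h1l, pow_zero, one_mul]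
    nlinarith [norm_nonneg (T x₀ - x₀)]
  | succ n ih =>
    have hsplit : x (n + 2) - x (n + 1) = (1 - l) • (T (x (n + 1)) - T (x n)) := by
      rw [hx (n + 1), hx n]; module
    calc ‖x (n + 2) - x (n + 1)‖ = (1 - l) * ‖T (x (n + 1)) - T (x n)‖ := by
          rw [hsplit, norm_smul, norm_of_nonneg h1l]
      _ ≤ (1 - l) * (γ * (((1 - l) * γ) ^ n * ‖T x₀ - x₀‖)) := by
          gcongr; exact (hT _ _).trans (by gcongr)
      _ = ((1 - l) * γ) ^ (n + 1) * ‖T x₀ - x₀‖ := by ring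

theorem halpern_norm_apply_sub_le (hl0 : 0 ≤ l) (hl1 : l ≤ 1) (hγ0 : 0 ≤ γ)
    (hγ1 : γ ≤ 1) (hT : ∀ x y : E, ‖T x - T y‖ ≤ γ * ‖x - y‖) (hxs : T xs = xs)
    (hD : ‖x₀ - xs‖ ≤ D)
    (hx0 : x 0 = x₀) (hx : ∀ k, x (k + 1) = l • x₀ + (1 - l) • T (x k)) (n : ℕ) :
    ‖T (x n) - x n‖ ≤ ((1 - l) * γ) ^ n * ‖T x₀ - x₀‖ + 2 * l * D := by
  have hball := halpern_norm_sub_fixedPoint_le hl0 hl1 hγ1 hT hxs hD hx0 hx n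
  have hanchor : ‖T (x n) - x₀‖ ≤ 2 * D := by
    have hTn : ‖T (x n) - xs‖ ≤ D := (norm_apply_sub_fixedPoint_le hγ1 hT hxs _).trans hball
    calc ‖T (x n) - x₀‖ ≤ ‖T (x n) - xs‖ + ‖xs - x₀‖ :=
          norm_sub_le_norm_sub_add_norm_sub _ _ _
      _ ≤ 2 * D := by rw [norm_sub_rev xs]; linarith
  have hsplit : T (x n) - x n = l • (T (x n) - x₀) + (x (n + 1) - x n) := by
    rw [hx n]; module
  calc ‖T (x n) - x n‖ ≤ l * ‖T (x n) - x₀‖ + ‖x (n + 1) - x n‖ := by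
        rw [hsplit]
        refine (norm_add_le _ _).trans_eq ?_
        rw [norm_smul, norm_of_nonneg hl0]
    _ ≤ l * (2 * D) + ((1 - l) * γ) ^ n * ‖T x₀ - x₀‖ := by
        gcongr; exact halpern_norm_succ_sub_le hl0 hl1 hγ0 hT hx0 hx n
    _ = _ := by ring

end Halpern

theorem fixed_step_halpern_iteration_complexity_general
    {E : Type*} [NormedAddCommGroup E] [NormedSpace ℝ E]
    (T : E → E) (γ : ℝ) (hγ0 : 0 < γ) (hγ1 : γ ≤ 1)
    (hT : ∀ x y : E, ‖T x - T y‖ ≤ γ * ‖x - y‖)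
    (xs : E) (hxs : T xs = xs)
    (x₀ : E)
    (ε : ℝ) (hε0 : 0 < ε)
    (Ds : ℝ) (hDs0 : 0 < Ds) (hDs : ‖x₀ - xs‖ ≤ Ds)
    (l : ℝ) (hl : l = ε / (4 * Ds + ε))
    (x : ℕ → E) (hx0 : x 0 = x₀)
    (hx : ∀ k : ℕ, x (k + 1) = l • x₀ + (1 - l) • T (x k)) :
    ∀ k : ℕ,
      k = ⌈Real.log (2 * ‖T x₀ - x₀‖ / ε) /
            (Real.log (1 / (1 - l)) + Real.log (1 / γ))⌉₊ →
      ‖T (x k) - x k‖ ≤ ε := by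
  intro k hk
  have hden : 0 < 4 * Ds + ε := by linarith
  have hl0 : 0 < l := by rw [hl]; positivity
  have hl1 : l < 1 := by rw [hl, div_lt_one hden]; linarith
  have hq0 : 0 < (1 - l) * γ := mul_pos (sub_pos.mpr hl1) hγ0
  have hq1 : (1 - l) * γ < 1 :=
    (mul_le_of_le_one_right (sub_pos.mpr hl1).le hγ1).trans_lt (by linarith)
  have hlog : Real.log (1 / (1 - l)) + Real.log (1 / γ) = Real.log (1 / ((1 - l) * γ)) := by
    rw [← Real.log_mul (by positivity) (by positivity), one_div_mul_one_div]
  have hdecay : ((1 - l) * γ) ^ k * ‖T x₀ - x₀‖ ≤ ε / 2 := by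
    refine pow_mul_le_of_log_div_log_le hq0 hq1 (half_pos hε0) ?_
    rw [div_div_eq_mul_div, mul_comm, ← hlog, hk]
    exact Nat.le_ceil _
  have hstep : l * (2 * Ds) ≤ ε / 2 := by
    rw [hl, div_mul_eq_mul_div, div_le_div_iff₀ hden two_pos]
    nlinarith
  linarith [halpern_norm_apply_sub_le hl0.le hl1.le hγ0.le hγ1 hT hxs hDs hx0 hx k]

/-- Iteration complexity of the fixed-step Halpern iteration for γ-Lipschitz
operators with 0 < γ ≤ 1: with step size λ = ε/(4D⋆ + ε) where D⋆ ≥ ‖x₀ - x⋆‖,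
after `k = ⌈ln(2‖T x₀ - x₀‖/ε) / (ln(1/(1-λ)) + ln(1/γ))⌉` iterations the
fixed-point error is at most ε. -/
theorem fixed_step_halpern_iteration_complexity
    {E : Type*} [NormedAddCommGroup E] [NormedSpace ℝ E]
    (T : E → E) (γ : ℝ) (hγ0 : 0 < γ) (hγ1 : γ ≤ 1)
    (hT : ∀ x y : E, ‖T x - T y‖ ≤ γ * ‖x - y‖)
    (xs : E) (hxs : T xs = xs)
    (x₀ : E) (hx₀ : T x₀ ≠ x₀)
    (ε : ℝ) (hε0 : 0 < ε) (hε1 : ε < 2 * ‖T x₀ - x₀‖)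
    (Ds : ℝ) (hDs0 : 0 < Ds) (hDs : ‖x₀ - xs‖ ≤ Ds)
    (l : ℝ) (hl : l = ε / (4 * Ds + ε))
    (x : ℕ → E) (hx0 : x 0 = x₀)
    (hx : ∀ k : ℕ, x (k + 1) = l • x₀ + (1 - l) • T (x k)) :
    ∀ k : ℕ,
      k = ⌈Real.log (2 * ‖T x₀ - x₀‖ / ε) /
            (Real.log (1 / (1 - l)) + Real.log (1 / γ))⌉₊ →
      ‖T (x k) - x k‖ ≤ ε :=
  fixed_step_halpern_iteration_complexity_general T γ hγ0 hγ1 hT xs hxs x₀ ε hε0 Ds hDs0 hDs l hl x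
    hx0 hx
end

section
/- Let C ⊆ E be a convex set of diameter at most D (i.e., ‖x - y‖ ≤ D for all x, y ∈ C) with D > 0, and let T : E → E map C into C and be γ-Lipschitz on C. Let ε > 0, β ∈ (0,1), set λ = (βε/D)/(1 + βε/D), and suppose 0 < γ < 1 + βε/D. Let x₀ ∈ C with T(x₀) ≠ x₀ and suppose ‖T(x₀) - x₀‖ > (1-β)·ε, and let the sequence (x_k) be defined by x_{k+1} = λ·x₀ + (1-λ)·T(x_k). Then for k = ⌈ln(‖T(x₀) - x₀‖/((1-β)·ε)) / (-ln((1-λ)·γ))⌉ we have ‖T(x_k) - x_k‖ ≤ ε. -/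
/-!
Each Halpern step contracts consecutive differences by `(1 - λ)γ < 1`, so
`‖x_{k+1} - x_k‖ ≤ ((1 - λ)γ)^k (1 - λ)‖T x₀ - x₀‖`, while
`(1 - λ)(T x_k - x_k) = (x_{k+1} - x_k) - λ(x₀ - x_k)` bounds the fixed-point residual by that
difference plus `λD`. With `λ = m/(1 + m)`, `m = βε/D`, the anchor term `λD/(1 - λ)` is exactly
`βε`, and the choice of `k` makes the geometric term at most `(1 - β)ε`.
-/

open Real

def halpernMap {E : Type*} [AddCommGroup E] [Module ℝ E] (T : E → E) (x₀ : E) (l : ℝ) (y : E) :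
    E :=
  l • x₀ + (1 - l) • T y

section HalpernIteration

variable {E : Type*} [NormedAddCommGroup E] [NormedSpace ℝ E] {T : E → E} {x₀ : E} {l : ℝ}

theorem halpernMap_mem {C : Set E} (hC : Convex ℝ C) (hTC : ∀ y ∈ C, T y ∈ C) (hx₀ : x₀ ∈ C)
    (hl0 : 0 ≤ l) (hl1 : l ≤ 1) {y : E} (hy : y ∈ C) : halpernMap T x₀ l y ∈ C :=
  hC hx₀ (hTC y hy) hl0 (sub_nonneg.2 hl1) (add_sub_cancel l 1)

theorem norm_halpernMap_sub_halpernMap (hl1 : l ≤ 1) (y z : E) :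
    ‖halpernMap T x₀ l y - halpernMap T x₀ l z‖ = (1 - l) * ‖T y - T z‖ := by
  rw [halpernMap, halpernMap, add_sub_add_left_eq_sub, ← smul_sub, norm_smul,
    Real.norm_of_nonneg (sub_nonneg.2 hl1)]

theorem one_sub_mul_norm_sub_le (hl0 : 0 ≤ l) (hl1 : l ≤ 1) (y : E) :
    (1 - l) * ‖T y - y‖ ≤ ‖halpernMap T x₀ l y - y‖ + l * ‖x₀ - y‖ := by
  have h : (1 - l) • (T y - y) = (halpernMap T x₀ l y - y) - l • (x₀ - y) := by
    rw [halpernMap]; module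
  calc (1 - l) * ‖T y - y‖ = ‖(1 - l) • (T y - y)‖ := by
        rw [norm_smul, Real.norm_of_nonneg (sub_nonneg.2 hl1)]
    _ ≤ ‖halpernMap T x₀ l y - y‖ + ‖l • (x₀ - y)‖ := h ▸ norm_sub_le _ _
    _ = ‖halpernMap T x₀ l y - y‖ + l * ‖x₀ - y‖ := by rw [norm_smul, Real.norm_of_nonneg hl0]

variable {x : ℕ → E} (hx : ∀ k, x (k + 1) = halpernMap T x₀ l (x k))
include hx

theorem halpern_mem {C : Set E} (hC : Convex ℝ C) (hTC : ∀ y ∈ C, T y ∈ C) (hx₀ : x₀ ∈ C)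
    (hl0 : 0 ≤ l) (hl1 : l ≤ 1) (h0 : x 0 ∈ C) (n : ℕ) : x n ∈ C := by
  induction n with
  | zero => exact h0
  | succ n ih => exact hx n ▸ halpernMap_mem hC hTC hx₀ hl0 hl1 ih

theorem norm_halpern_succ_sub_le {C : Set E} {γ : ℝ} (hγ : 0 ≤ γ)
    (hT : ∀ y ∈ C, ∀ z ∈ C, ‖T y - T z‖ ≤ γ * ‖y - z‖) (hl1 : l ≤ 1) (hmem : ∀ n, x n ∈ C)
    (n : ℕ) : ‖x (n + 1) - x n‖ ≤ ((1 - l) * γ) ^ n * ‖x 1 - x 0‖ := by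
  induction n with
  | zero => simp
  | succ n ih =>
    calc ‖x (n + 2) - x (n + 1)‖ = (1 - l) * ‖T (x (n + 1)) - T (x n)‖ := by
          rw [hx, hx, norm_halpernMap_sub_halpernMap hl1]
      _ ≤ (1 - l) * (γ * ‖x (n + 1) - x n‖) :=
          mul_le_mul_of_nonneg_left (hT _ (hmem _) _ (hmem _)) (sub_nonneg.2 hl1)
      _ ≤ (1 - l) * (γ * (((1 - l) * γ) ^ n * ‖x 1 - x 0‖)) := by
          have := sub_nonneg.2 hl1
          gcongr
      _ = ((1 - l) * γ) ^ (n + 1) * ‖x 1 - x 0‖ := by ring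

theorem one_sub_mul_norm_halpern_sub_le_s5 {C : Set E} (hC : Convex ℝ C)
    {D : ℝ} (hdiam : ∀ y ∈ C, ∀ z ∈ C, ‖y - z‖ ≤ D) (hTC : ∀ y ∈ C, T y ∈ C) {γ : ℝ}
    (hγ : 0 ≤ γ) (hT : ∀ y ∈ C, ∀ z ∈ C, ‖T y - T z‖ ≤ γ * ‖y - z‖)
    (hl0 : 0 ≤ l) (hl1 : l ≤ 1) (hx₀ : x₀ ∈ C) (h0 : x 0 = x₀) (k : ℕ) :
    (1 - l) * ‖T (x k) - x k‖ ≤ ((1 - l) * γ) ^ k * ((1 - l) * ‖T x₀ - x₀‖) + l * D := by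
  have hmem := halpern_mem hx hC hTC hx₀ hl0 hl1 (h0 ▸ hx₀)
  have hfirst : ‖x 1 - x 0‖ = (1 - l) * ‖T x₀ - x₀‖ := by
    have h : x 1 - x 0 = (1 - l) • (T x₀ - x₀) := by rw [hx, h0, halpernMap]; module
    rw [h, norm_smul, Real.norm_of_nonneg (sub_nonneg.2 hl1)]
  calc (1 - l) * ‖T (x k) - x k‖ ≤ ‖x (k + 1) - x k‖ + l * ‖x₀ - x k‖ :=
        hx k ▸ one_sub_mul_norm_sub_le hl0 hl1 (x k)
    _ ≤ ((1 - l) * γ) ^ k * ((1 - l) * ‖T x₀ - x₀‖) + l * D := by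
        rw [← hfirst]
        gcongr
        · exact norm_halpern_succ_sub_le hx hγ hT hl1 hmem k
        · exact hdiam _ hx₀ _ (hmem k)

end HalpernIteration

theorem pow_mul_le_of_log_div_le {q r a : ℝ} (hq0 : 0 < q) (hq1 : q < 1) (hr : 0 < r)
    (ha : 0 < a) {k : ℕ} (hk : log (r / a) / -log q ≤ k) : q ^ k * r ≤ a := by
  have hlogq : 0 < -log q := neg_pos.2 (log_neg hq0 hq1)
  rw [div_le_iff₀ hlogq, log_div hr.ne' ha.ne'] at hk
  rw [← log_le_log_iff (by positivity) ha, log_mul (by positivity) hr.ne', log_pow]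
  linarith

theorem fixed_step_halpern_mildly_expansive_general
    {E : Type*} [NormedAddCommGroup E] [NormedSpace ℝ E]
    (C : Set E) (hC : Convex ℝ C)
    (D : ℝ) (hD0 : 0 < D) (hdiam : ∀ x ∈ C, ∀ y ∈ C, ‖x - y‖ ≤ D)
    (T : E → E) (hTC : ∀ x ∈ C, T x ∈ C)
    (γ : ℝ) (hγ0 : 0 < γ)
    (hT : ∀ x ∈ C, ∀ y ∈ C, ‖T x - T y‖ ≤ γ * ‖x - y‖)
    (ε : ℝ) (hε : 0 < ε) (β : ℝ) (hβ0 : 0 < β) (hβ1 : β < 1)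
    (hγ : γ < 1 + β * ε / D)
    (l : ℝ) (hl : l = (β * ε / D) / (1 + β * ε / D))
    (x₀ : E) (hx₀C : x₀ ∈ C)
    (hbig : (1 - β) * ε < ‖T x₀ - x₀‖)
    (x : ℕ → E) (hx0 : x 0 = x₀)
    (hx : ∀ k : ℕ, x (k + 1) = l • x₀ + (1 - l) • T (x k)) :
    ∀ k : ℕ,
      k = ⌈Real.log (‖T x₀ - x₀‖ / ((1 - β) * ε)) /
            (-Real.log ((1 - l) * γ))⌉₊ →
      ‖T (x k) - x k‖ ≤ ε := by
  intro k hk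
  have hl0 : 0 < l := hl ▸ by positivity
  have h1l : 1 - l = 1 / (1 + β * ε / D) := by rw [hl]; field_simp; ring
  have h1l0 : 0 < 1 - l := h1l ▸ by positivity
  have hlD : l * D = (1 - l) * (β * ε) := by rw [hl]; field_simp; ring
  have hq1 : (1 - l) * γ < 1 := by rwa [h1l, one_div_mul_eq_div, div_lt_one (by positivity)]
  have hε' : 0 < (1 - β) * ε := mul_pos (by linarith) hε
  have hgeom : ((1 - l) * γ) ^ k * ‖T x₀ - x₀‖ ≤ (1 - β) * ε :=
    pow_mul_le_of_log_div_le (by positivity) hq1 (hε'.trans hbig) hε' (hk ▸ Nat.le_ceil _)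
  have hres := one_sub_mul_norm_halpern_sub_le_s5 hx hC hdiam hTC hγ0.le hT hl0.le (by linarith)
    hx₀C hx0 k
  rw [hlD] at hres
  refine le_of_mul_le_mul_left ?_ h1l0
  nlinarith

/-- Convergence of the fixed-step Halpern iteration for a mildly expansive
operator mapping a convex set of diameter at most `D` to itself: if
`γ < 1 + βε/D` and `λ = (βε/D)/(1 + βε/D)`, then after
`k = ⌈ln(‖T x₀ - x₀‖/((1-β)ε)) / (-ln((1-λ)γ))⌉` iterations the
fixed-point error is at most ε. -/
theorem fixed_step_halpern_mildly_expansive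
    {E : Type*} [NormedAddCommGroup E] [NormedSpace ℝ E]
    (C : Set E) (hC : Convex ℝ C)
    (D : ℝ) (hD0 : 0 < D) (hdiam : ∀ x ∈ C, ∀ y ∈ C, ‖x - y‖ ≤ D)
    (T : E → E) (hTC : ∀ x ∈ C, T x ∈ C)
    (γ : ℝ) (hγ0 : 0 < γ)
    (hT : ∀ x ∈ C, ∀ y ∈ C, ‖T x - T y‖ ≤ γ * ‖x - y‖)
    (ε : ℝ) (hε : 0 < ε) (β : ℝ) (hβ0 : 0 < β) (hβ1 : β < 1)
    (hγ : γ < 1 + β * ε / D)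
    (l : ℝ) (hl : l = (β * ε / D) / (1 + β * ε / D))
    (x₀ : E) (hx₀C : x₀ ∈ C) (hx₀ : T x₀ ≠ x₀)
    (hbig : (1 - β) * ε < ‖T x₀ - x₀‖)
    (x : ℕ → E) (hx0 : x 0 = x₀)
    (hx : ∀ k : ℕ, x (k + 1) = l • x₀ + (1 - l) • T (x k)) :
    ∀ k : ℕ,
      k = ⌈Real.log (‖T x₀ - x₀‖ / ((1 - β) * ε)) /
            (-Real.log ((1 - l) * γ))⌉₊ →
      ‖T (x k) - x k‖ ≤ ε :=
  fixed_step_halpern_mildly_expansive_general C hC D hD0 hdiam T hTC γ hγ0 hT ε hε β hβ0 hβ1 hγ l hl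
    x₀ hx₀C hbig x hx0 hx
end

section
/- Let α ∈ [0,1) and D > 0, and define t : ℝ → ℝ by t(x) = min(D/2, max(-D/2, x + exp(αx/D))). Then for all x, y ∈ [-D/2, D/2], |t(x) - t(y)| ≤ (1 + α·max(|t(x) - x|, |t(y) - y|)/D)·|x - y|. -/
/-!
Below `D / 2` the lower clip is inactive, so `t x = x + δ x` with fixed-point error
`δ x = min (D / 2 - x) (exp (κ x))`, `κ = α / D`. For `y ≤ x` and `u = κ (x - y)` we have
`exp (κ y) = exp (κ x) e⁻ᵘ ≥ (1 - u) exp (κ x)`, hence `δ y ≥ (1 - u) δ x`, which is exactly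
`t x - t y = (x - y) + δ x - δ y ≤ (1 + κ δ x) (x - y)`.
-/

open Real

namespace ExpShiftClip

noncomputable def expShiftClip (c κ x : ℝ) : ℝ := min c (x + exp (κ * x))

variable {c κ : ℝ}

lemma expShiftClip_sub_self (x : ℝ) :
    expShiftClip c κ x - x = min (c - x) (exp (κ * x)) := by
  rw [expShiftClip, ← min_sub_sub_right, add_sub_cancel_left]

lemma monotone_expShiftClip (hκ : 0 ≤ κ) : Monotone (expShiftClip c κ) :=
  monotone_const.min (monotone_id.add (exp_monotone.comp (monotone_id.const_mul hκ)))

lemma min_sub_exp_mul_one_sub_le (hκ : 0 ≤ κ) {x y : ℝ} (hyx : y ≤ x) (hxc : x ≤ c) :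
    min (c - x) (exp (κ * x)) * (1 - κ * (x - y)) ≤ min (c - y) (exp (κ * y)) := by
  set δ := min (c - x) (exp (κ * x))
  have hδ : 0 ≤ δ := le_min (by linarith) (exp_pos _).le
  have hu : 0 ≤ κ * (x - y) := mul_nonneg hκ (by linarith)
  refine le_min ?_ ?_
  · nlinarith [min_le_left (c - x) (exp (κ * x))]
  · calc δ * (1 - κ * (x - y)) ≤ δ * exp (-(κ * (x - y))) := by
          gcongr
          linarith [add_one_le_exp (-(κ * (x - y)))]
      _ ≤ exp (κ * x) * exp (-(κ * (x - y))) := by gcongr; exact min_le_right _ _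
      _ = exp (κ * y) := by rw [← exp_add]; ring_nf

lemma expShiftClip_sub_le (hκ : 0 ≤ κ) {x y : ℝ} (hyx : y ≤ x) (hxc : x ≤ c) :
    expShiftClip c κ x - expShiftClip c κ y ≤ (1 + κ * (expShiftClip c κ x - x)) * (x - y) := by
  have hgap := min_sub_exp_mul_one_sub_le hκ hyx hxc
  rw [← expShiftClip_sub_self, ← expShiftClip_sub_self] at hgap
  linear_combination hgap

lemma abs_expShiftClip_sub_le (hκ : 0 ≤ κ) {x y : ℝ} (hxc : x ≤ c) (hyc : y ≤ c) :
    |expShiftClip c κ x - expShiftClip c κ y| ≤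
      (1 + κ * max |expShiftClip c κ x - x| |expShiftClip c κ y - y|) * |x - y| := by
  wlog hyx : y ≤ x generalizing x y
  · simpa only [abs_sub_comm, max_comm] using this hyc hxc (le_of_not_ge hyx)
  have hmono := monotone_expShiftClip (c := c) hκ hyx
  rw [abs_of_nonneg (sub_nonneg.2 hmono), abs_of_nonneg (sub_nonneg.2 hyx)]
  calc _ ≤ (1 + κ * (expShiftClip c κ x - x)) * (x - y) := expShiftClip_sub_le hκ hyx hxc
    _ ≤ _ := by
      gcongr
      exact (le_abs_self _).trans (le_max_left _ _)

end ExpShiftClip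

open ExpShiftClip in
theorem clipped_exp_shift_gradually_expansive_general
    (α : ℝ) (hα0 : 0 ≤ α) (D : ℝ) (hD : 0 < D)
    (t : ℝ → ℝ)
    (ht : ∀ x : ℝ, t x = min (D / 2) (max (-(D / 2)) (x + Real.exp (α * x / D)))) :
    ∀ x ∈ Set.Icc (-(D / 2)) (D / 2), ∀ y ∈ Set.Icc (-(D / 2)) (D / 2),
      |t x - t y| ≤ (1 + α * max |t x - x| |t y - y| / D) * |x - y| := by
  have ht_eq : ∀ x ∈ Set.Icc (-(D / 2)) (D / 2), t x = expShiftClip (D / 2) (α / D) x := by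
    intro x hx
    rw [ht, expShiftClip, max_eq_right, div_mul_eq_mul_div]
    linarith [hx.1, exp_pos (α * x / D)]
  intro x hx y hy
  rw [ht_eq x hx, ht_eq y hy, mul_div_right_comm]
  exact abs_expShiftClip_sub_le (div_nonneg hα0 hD.le) hx.2 hy.2

/-- The univariate operator `t(x) = clip(x + exp(αx/D))`, where `clip` is the
projection onto `[-D/2, D/2]`, is α-gradually expansive on `[-D/2, D/2]`. -/
theorem clipped_exp_shift_gradually_expansive
    (α : ℝ) (hα0 : 0 ≤ α) (hα1 : α < 1) (D : ℝ) (hD : 0 < D)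
    (t : ℝ → ℝ)
    (ht : ∀ x : ℝ, t x = min (D / 2) (max (-(D / 2)) (x + Real.exp (α * x / D)))) :
    ∀ x ∈ Set.Icc (-(D / 2)) (D / 2), ∀ y ∈ Set.Icc (-(D / 2)) (D / 2),
      |t x - t y| ≤ (1 + α * max |t x - x| |t y - y| / D) * |x - y| :=
  clipped_exp_shift_gradually_expansive_general α hα0 D hD t ht
end

section
/- Let d ≥ 1, α ∈ [0,1), D > 0, let C = [-D/2, D/2]^d ⊆ ℝ^d, and define T : C → C coordinatewise by T(x)ᵢ = min(D/2, max(-D/2, xᵢ + exp(α·xᵢ/D))) for i = 1,…,d. Then for all x, y ∈ C, ‖T(x) - T(y)‖_∞ ≤ (1 + α·max(‖T(x) - x‖_∞, ‖T(y) - y‖_∞)/D)·‖x - y‖_∞, i.e., T is α-gradually expansive on C with respect to the ℓ∞ norm. -/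
open Real

lemma scalar_key (α D : ℝ) (hα0 : 0 ≤ α) (hD : 0 < D) (s t : ℝ)
    (hs1 : -(D/2) ≤ s) (ht2 : t ≤ D/2) (hst : s ≤ t) :
    |min (D/2) (max (-(D/2)) (t + exp (α*t/D))) - min (D/2) (max (-(D/2)) (s + exp (α*s/D)))|
      ≤ (1 + α * max |min (D/2) (max (-(D/2)) (s + exp (α*s/D))) - s|
                    |min (D/2) (max (-(D/2)) (t + exp (α*t/D))) - t| / D) * (t - s) := by
  have hEs : 0 < exp (α*s/D) := exp_pos _
  have hEt : 0 < exp (α*t/D) := exp_pos _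
  have hEst : exp (α*s/D) ≤ exp (α*t/D) := by
    apply exp_le_exp.mpr
    apply div_le_div_of_nonneg_right (mul_le_mul_of_nonneg_left hst hα0) hD.le
  have hmax_s : max (-(D/2)) (s + exp (α*s/D)) = s + exp (α*s/D) :=
    max_eq_right (by nlinarith)
  have hmax_t : max (-(D/2)) (t + exp (α*t/D)) = t + exp (α*t/D) :=
    max_eq_right (by nlinarith)
  rw [hmax_s, hmax_t]
  set Es := exp (α*s/D) with hEsdef
  set Et := exp (α*t/D) with hEtdef
  have hs2 : s ≤ D/2 := hst.trans ht2
  have hfs_ge : s ≤ min (D/2) (s + Es) := le_min hs2 (by linarith)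
  have hft_ge : t ≤ min (D/2) (t + Et) := le_min ht2 (by linarith)
  have hmono : min (D/2) (s + Es) ≤ min (D/2) (t + Et) :=
    min_le_min le_rfl (by linarith)
  rw [abs_of_nonneg (by linarith), abs_of_nonneg (by linarith),
      abs_of_nonneg (by linarith)]
  -- key exp fact: Es = Et * exp (α*s/D - α*t/D) and exp(x) ≥ 1 + x
  have hexp1 : Es = Et * exp (α*s/D - α*t/D) := by
    rw [hEsdef, hEtdef, ← exp_add]; ring_nf
  have hexp2 : 1 + (α*s/D - α*t/D) ≤ exp (α*s/D - α*t/D) := by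
    have := add_one_le_exp (α*s/D - α*t/D); linarith
  have hexppos : 0 < exp (α*s/D - α*t/D) := exp_pos _
  rcases le_or_gt (t + Et) (D/2) with h1 | h1
  · -- no clipping anywhere
    have hft : min (D/2) (t + Et) = t + Et := min_eq_right h1
    have hfs : min (D/2) (s + Es) = s + Es := min_eq_right (by linarith)
    rw [hft, hfs]
    have hmaxr : max (s + Es - s) (t + Et - t) = Et := by
      simp only [add_sub_cancel_left]; exact max_eq_right hEst
    rw [hmaxr]
    -- need: Et - Es ≤ α * Et * (t-s)/D
    have key : Et - Es ≤ Et * (α*t/D - α*s/D) := by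
      nlinarith [mul_le_mul_of_nonneg_left hexp2 hEt.le]
    have hts : 0 ≤ t - s := by linarith
    have : α * Et / D * (t - s) = Et * (α*t/D - α*s/D) := by ring
    nlinarith
  · have hft : min (D/2) (t + Et) = D/2 := min_eq_left h1.le
    rcases le_or_gt (D/2) (s + Es) with h2 | h2
    · have hfs : min (D/2) (s + Es) = D/2 := min_eq_left h2
      rw [hft, hfs]
      have h0 : 0 ≤ max (D/2 - s) (D/2 - t) := le_max_of_le_right (by linarith)
      have : 0 ≤ α * max (D/2 - s) (D/2 - t) / D := by positivity
      nlinarith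
    · have hfs : min (D/2) (s + Es) = s + Es := min_eq_right h2.le
      rw [hft, hfs]
      have hc0 : 0 ≤ D/2 - t := by linarith
      have hcEt : D/2 - t ≤ Et := by linarith
      -- c - Es ≤ c * (α*(t-s)/D)
      have hu0 : 0 ≤ α*t/D - α*s/D := by
        have : α*s ≤ α*t := mul_le_mul_of_nonneg_left hst hα0
        have := div_le_div_of_nonneg_right this hD.le
        linarith
      have key : (D/2 - t) - Es ≤ (D/2 - t) * (α*t/D - α*s/D) := by
        have h1' : (D/2 - t) * (1 - (α*t/D - α*s/D)) ≤ (D/2 - t) * exp (α*s/D - α*t/D) := by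
          apply mul_le_mul_of_nonneg_left _ hc0
          linarith
        have h2' : (D/2 - t) * exp (α*s/D - α*t/D) ≤ Et * exp (α*s/D - α*t/D) :=
          mul_le_mul_of_nonneg_right hcEt hexppos.le
        nlinarith
      have hmaxc : D/2 - t ≤ max (s + Es - s) (D/2 - t) := le_max_right _ _
      have hmax0 : 0 ≤ max (s + Es - s) (D/2 - t) := le_trans hc0 hmaxc
      have hfac : α * (D/2 - t) / D * (t - s) ≤ α * max (s + Es - s) (D/2 - t) / D * (t - s) := by
        apply mul_le_mul_of_nonneg_right _ (by linarith)
        apply div_le_div_of_nonneg_right (mul_le_mul_of_nonneg_left hmaxc hα0) hD.le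
      have heq : (D/2 - t) * (α*t/D - α*s/D) = α * (D/2 - t) / D * (t - s) := by ring
      linarith


/-- The coordinatewise clipped exponential shift
`T(x)ᵢ = clip(xᵢ + exp(αxᵢ/D))` on the hypercube `[-D/2, D/2]^d` is
α-gradually expansive with respect to the ℓ∞ norm (the sup norm on `Fin d → ℝ`). -/
theorem clipped_exp_shift_gradually_expansive_linf
    (d : ℕ) (hd : 1 ≤ d)
    (α : ℝ) (hα0 : 0 ≤ α) (hα1 : α < 1) (D : ℝ) (hD : 0 < D)
    (T : (Fin d → ℝ) → (Fin d → ℝ))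
    (hT : ∀ (x : Fin d → ℝ) (i : Fin d),
      T x i = min (D / 2) (max (-(D / 2)) (x i + Real.exp (α * x i / D)))) :
    ∀ x : Fin d → ℝ, (∀ i, x i ∈ Set.Icc (-(D / 2)) (D / 2)) →
    ∀ y : Fin d → ℝ, (∀ i, y i ∈ Set.Icc (-(D / 2)) (D / 2)) →
      ‖T x - T y‖ ≤ (1 + α * max ‖T x - x‖ ‖T y - y‖ / D) * ‖x - y‖ := by
  intro x hx y hy
  have hM0 : (0:ℝ) ≤ max ‖T x - x‖ ‖T y - y‖ := le_max_of_le_left (norm_nonneg _)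
  have hK0 : (0:ℝ) ≤ 1 + α * max ‖T x - x‖ ‖T y - y‖ / D := by positivity
  rw [pi_norm_le_iff_of_nonneg (by positivity)]
  intro i
  have hxy : |x i - y i| ≤ ‖x - y‖ := by
    have := norm_le_pi_norm (x - y) i
    simpa [Real.norm_eq_abs] using this
  have hrx : |T x i - x i| ≤ ‖T x - x‖ := by
    have := norm_le_pi_norm (T x - x) i
    simpa [Real.norm_eq_abs] using this
  have hry : |T y i - y i| ≤ ‖T y - y‖ := by
    have := norm_le_pi_norm (T y - y) i
    simpa [Real.norm_eq_abs] using this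
  have hmaxle : max |T x i - x i| |T y i - y i| ≤ max ‖T x - x‖ ‖T y - y‖ :=
    max_le_max hrx hry
  have step : |T x i - T y i| ≤
      (1 + α * max |T x i - x i| |T y i - y i| / D) * |x i - y i| := by
    rcases le_total (y i) (x i) with h | h
    · have := scalar_key α D hα0 hD (y i) (x i) (hy i).1 (hx i).2 h
      rw [← hT x i, ← hT y i] at this
      calc |T x i - T y i| ≤ (1 + α * max |T y i - y i| |T x i - x i| / D) * (x i - y i) :=
            this
        _ = (1 + α * max |T x i - x i| |T y i - y i| / D) * |x i - y i| := by
            rw [max_comm, abs_of_nonneg (show (0:ℝ) ≤ x i - y i by linarith)]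
    · have := scalar_key α D hα0 hD (x i) (y i) (hx i).1 (hy i).2 h
      rw [← hT y i, ← hT x i] at this
      calc |T x i - T y i| = |T y i - T x i| := abs_sub_comm _ _
        _ ≤ (1 + α * max |T x i - x i| |T y i - y i| / D) * (y i - x i) := this
        _ = (1 + α * max |T x i - x i| |T y i - y i| / D) * |x i - y i| := by
            rw [abs_sub_comm (x i), abs_of_nonneg (show (0:ℝ) ≤ y i - x i by linarith)]
  have hfac : (1 + α * max |T x i - x i| |T y i - y i| / D) ≤
      (1 + α * max ‖T x - x‖ ‖T y - y‖ / D) := by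
    have := div_le_div_of_nonneg_right (mul_le_mul_of_nonneg_left hmaxle hα0) hD.le
    linarith
  have hmm : (0:ℝ) ≤ max |T x i - x i| |T y i - y i| := le_max_of_le_left (abs_nonneg _)
  calc ‖(T x - T y) i‖ = |T x i - T y i| := by simp [Real.norm_eq_abs]
    _ ≤ (1 + α * max |T x i - x i| |T y i - y i| / D) * |x i - y i| := step
    _ ≤ (1 + α * max ‖T x - x‖ ‖T y - y‖ / D) * ‖x - y‖ :=
        mul_le_mul hfac hxy (abs_nonneg _) hK0
end

section
/- Let C ⊆ E be a convex set of diameter at most D > 0 and let F : E → E satisfy ‖F(x) - F(y)‖ ≤ (α/D)·max(‖F(x)‖, ‖F(y)‖)·‖x - y‖ for all x, y ∈ C, for some α ∈ [0,1). Let C' ⊆ E be a convex set of diameter at most D' > 0, and let R : E → E be nonexpansive on C' with R(C') ⊆ C and such that x + F(R(x)) ∈ C' for all x ∈ C'. Then the operator T̃ defined by T̃(x) = x + F(R(x)) satisfies, for all x, y ∈ C', ‖T̃(x) - T̃(y)‖ ≤ (1 + α'·max(‖T̃(x) - x‖, ‖T̃(y) - y‖)/D')·‖x - y‖ with α' = α·D'/D;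 that is, T̃ is α'-gradually expansive on C'. -/
open Set

theorem norm_add_sub_add_le_of_le {E : Type*} [SeminormedAddCommGroup E] {x y a b : E} {c : ℝ}
    (h : ‖a - b‖ ≤ c * ‖x - y‖) : ‖(x + a) - (y + b)‖ ≤ (1 + c) * ‖x - y‖ :=
  calc ‖(x + a) - (y + b)‖ = ‖(x - y) + (a - b)‖ := by rw [add_sub_add_comm]
    _ ≤ ‖x - y‖ + ‖a - b‖ := norm_add_le _ _
    _ ≤ (1 + c) * ‖x - y‖ := by linarith

theorem norm_comp_sub_le_of_nonexpansive {X Y E : Type*} [SeminormedAddCommGroup X]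
    [SeminormedAddCommGroup Y] [SeminormedAddCommGroup E] {s : Set X} {t : Set Y}
    {F : Y → E} {R : X → Y} {c : ℝ} (hc : 0 ≤ c)
    (hF : ∀ u ∈ t, ∀ v ∈ t, ‖F u - F v‖ ≤ c * max ‖F u‖ ‖F v‖ * ‖u - v‖)
    (hR : ∀ x ∈ s, ∀ y ∈ s, ‖R x - R y‖ ≤ ‖x - y‖) (hRst : MapsTo R s t) :
    ∀ x ∈ s, ∀ y ∈ s,
      ‖F (R x) - F (R y)‖ ≤ c * max ‖F (R x)‖ ‖F (R y)‖ * ‖x - y‖ := by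
  intro x hx y hy
  have hmax : 0 ≤ max ‖F (R x)‖ ‖F (R y)‖ := (norm_nonneg _).trans (le_max_left _ _)
  exact (hF _ (hRst hx) _ (hRst hy)).trans
    (mul_le_mul_of_nonneg_left (hR x hx y hy) (mul_nonneg hc hmax))

theorem gradually_expansive_composition_general
    {E : Type*} [NormedAddCommGroup E] [NormedSpace ℝ E]
    (C : Set E)
    (D : ℝ) (hD0 : 0 < D)
    (F : E → E) (α : ℝ) (hα0 : 0 ≤ α)
    (hFbound : ∀ x ∈ C, ∀ y ∈ C,
      ‖F x - F y‖ ≤ (α / D) * max ‖F x‖ ‖F y‖ * ‖x - y‖)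
    (C' : Set E)
    (D' : ℝ) (hD'0 : 0 < D')
    (R : E → E) (hR : ∀ x ∈ C', ∀ y ∈ C', ‖R x - R y‖ ≤ ‖x - y‖)
    (hRC : ∀ x ∈ C', R x ∈ C)
    (Tt : E → E) (hTt : ∀ x : E, Tt x = x + F (R x)) :
    ∀ x ∈ C', ∀ y ∈ C',
      ‖Tt x - Tt y‖ ≤
        (1 + (α * D' / D) * max ‖Tt x - x‖ ‖Tt y - y‖ / D') * ‖x - y‖ := by
  intro x hx y hy
  have hdisp : ∀ z, Tt z - z = F (R z) := fun z => by rw [hTt, add_sub_cancel_left]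
  have hα' : ∀ m : ℝ, α * D' / D * m / D' = α / D * m := fun m => by field_simp
  rw [hdisp, hdisp, hα', hTt, hTt]
  exact norm_add_sub_add_le_of_le
    (norm_comp_sub_le_of_nonexpansive (by positivity) hFbound hR hRC x hx y hy)

/-- Composition preserves gradual expansiveness: if `F` satisfies the
displacement bound `‖F x - F y‖ ≤ (α/D) max(‖F x‖, ‖F y‖) ‖x - y‖` on `C`,
and `R` is nonexpansive on `C'` with `R(C') ⊆ C` and `x + F(R x) ∈ C'` for all
`x ∈ C'`, then `T̃ = Id + F ∘ R` is α'-gradually expansive on `C'` with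
`α' = α D'/D`. -/
theorem gradually_expansive_composition
    {E : Type*} [NormedAddCommGroup E] [NormedSpace ℝ E]
    (C : Set E) (hC : Convex ℝ C)
    (D : ℝ) (hD0 : 0 < D) (hdiam : ∀ x ∈ C, ∀ y ∈ C, ‖x - y‖ ≤ D)
    (F : E → E) (α : ℝ) (hα0 : 0 ≤ α) (hα1 : α < 1)
    (hFbound : ∀ x ∈ C, ∀ y ∈ C,
      ‖F x - F y‖ ≤ (α / D) * max ‖F x‖ ‖F y‖ * ‖x - y‖)
    (C' : Set E) (hC' : Convex ℝ C')
    (D' : ℝ) (hD'0 : 0 < D') (hdiam' : ∀ x ∈ C', ∀ y ∈ C', ‖x - y‖ ≤ D')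
    (R : E → E) (hR : ∀ x ∈ C', ∀ y ∈ C', ‖R x - R y‖ ≤ ‖x - y‖)
    (hRC : ∀ x ∈ C', R x ∈ C)
    (Tt : E → E) (hTt : ∀ x : E, Tt x = x + F (R x))
    (hTtC : ∀ x ∈ C', Tt x ∈ C') :
    ∀ x ∈ C', ∀ y ∈ C',
      ‖Tt x - Tt y‖ ≤
        (1 + (α * D' / D) * max ‖Tt x - x‖ ‖Tt y - y‖ / D') * ‖x - y‖ :=
  gradually_expansive_composition_general C D hD0 F α hα0 hFbound C' D' hD'0 R hR hRC Tt hTt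
end
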